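/- arXiv:2309.07279 — 2 statements merged into one kernel-verified Lean document; each statement's English description precedes it below -/
import Mathlib

section
/- Let P be a positive system of roots of L, let N := Σ_{α∈P} L_α, and let H_gen := {h ∈ H : α(h) ≠ 0 for every root α}. Then the map N × H_gen → L sending (u, h) to exp(ad u)(h) is injective, and its image is exactly the set {h + n : h ∈ H_gen, n ∈ N}. (This is the Lie-algebra, points-level form of the T-equivariant isomorphism a : U × 𝔱_gen → 𝔟_gen proved in the paper's lemma comparing Hamiltonian reduction with restriction over the generic locus of the Cartan.) -/
open LieModule LieAlgebra

/-!
Filter `N` by height: `F m := rootFiltration H P m` is the sum of the root spaces `L_γ` of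
those positive roots `γ` that are reached from a positive root by `m` successive additions of
positive roots. Then
`⁅N, F m⁆ ⊆ F (m + 1)`, `F m = 0` once `m ≥ |P|` (the partial sums form a chain of distinct
positive roots), and for generic `h` the map `ad h` is bijective on every `F m`, since it acts
on `L_γ` with the single eigenvalue `γ h ≠ 0`. If `u ≡ u'` modulo `F m`, then
`exp (ad u) h - exp (ad u') h ≡ ⁅u - u', h⁆` modulo `F (m + 1)`; so injectivity and
surjectivity both follow by successive approximation along the filtration, while `h` itself is
recovered as the `H`-component of `exp (ad u) h ∈ h + N`.
-/

/-- The exponential `Σ_{k ≥ 0} (1/k!) • f ^ k` of a nilpotent endomorphism of a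
finite-dimensional space.  A nilpotent endomorphism `f` of a space of dimension `d`
satisfies `f ^ d = 0`, so truncating at `k ≤ d` computes the full (finite) sum. -/
noncomputable def expNilpotent {K L : Type*} [Field K] [AddCommGroup L] [Module K L]
    (f : Module.End K L) : Module.End K L :=
  ∑ k ∈ Finset.range (Module.finrank K L + 1), (k.factorial : K)⁻¹ • f ^ k

section expNilpotent

variable {K V : Type*} [Field K] [AddCommGroup V] [Module K V] {f g : Module.End K V} {x : V}
  {W : Submodule K V}

lemma expNilpotent_apply :
    expNilpotent f x =
      ∑ k ∈ Finset.range (Module.finrank K V + 1), (k.factorial : K)⁻¹ • (f ^ k) x := by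
  simp [expNilpotent, LinearMap.sum_apply]

lemma expNilpotent_apply_sub_self_mem (h : ∀ k, (f ^ (k + 1)) x ∈ W) :
    expNilpotent f x - x ∈ W := by
  rw [expNilpotent_apply, Finset.sum_range_succ']
  simpa using W.sum_mem fun k _ => W.smul_mem _ (h k)

lemma expNilpotent_sub_expNilpotent_sub_mem [FiniteDimensional K V]
    (h : ∀ k, (f ^ (k + 2)) x - (g ^ (k + 2)) x ∈ W) :
    expNilpotent f x - expNilpotent g x - (f x - g x) ∈ W := by
  rcases (Module.finrank K V).eq_zero_or_pos with hV | hV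
  · have := Module.finrank_zero_iff.mp hV
    simp [Subsingleton.elim _ (0 : V)]
  obtain ⟨d, hd⟩ := Nat.exists_eq_succ_of_ne_zero hV.ne'
  rw [expNilpotent_apply, expNilpotent_apply, hd, ← Finset.sum_sub_distrib,
    Finset.sum_range_succ', Finset.sum_range_succ']
  simpa [← smul_sub] using W.sum_mem fun k _ => W.smul_mem _ (h k)

end expNilpotent

lemma injOn_of_le_map {K V : Type*} [Field K] [AddCommGroup V] [Module K V]
    [FiniteDimensional K V] {f : Module.End K V} {W : Submodule K V} (hmaps : W ≤ W.comap f)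
    (hsurj : W ≤ W.map f) :
    Set.InjOn f W := by
  have hg : Function.Surjective (f.restrict hmaps) := by
    rintro ⟨y, hy⟩
    obtain ⟨x, hx, rfl⟩ := hsurj hy
    exact ⟨⟨x, hx⟩, rfl⟩
  intro x hx y hy hxy
  have hxy' : f.restrict hmaps ⟨x, hx⟩ = f.restrict hmaps ⟨y, hy⟩ := Subtype.ext hxy
  exact congrArg Subtype.val (LinearMap.injective_iff_surjective.mpr hg hxy')

lemma exists_lie_eq_of_mem_genWeightSpace {K L M : Type*} [Field K] [LieRing L]
    [LieAlgebra K L] [LieRing.IsNilpotent L] [AddCommGroup M] [Module K M] [LieRingModule L M]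
    [LieModule K L M] [IsNoetherian K M] {χ : L → K} {x : L} (hχ : χ x ≠ 0) {m : M}
    (hm : m ∈ genWeightSpace M χ) :
    ∃ m' ∈ genWeightSpace M χ, ⁅x, m'⁆ = m := by
  have hunit : IsUnit (toEnd K L (genWeightSpace M χ) x) := by
    simpa using (isNilpotent_toEnd_sub_algebraMap M χ x).isUnit_add_right_of_commute
      ((Ne.isUnit hχ).map (algebraMap K _)) (Algebra.commutes _ _).symm
  obtain ⟨m', hm'⟩ := ((Module.End.isUnit_iff _).mp hunit).2 ⟨m, hm⟩
  exact ⟨m', m'.2, congrArg Subtype.val hm'⟩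

section PositiveSums

variable {V : Type*} [AddCommGroup V] {P : Set V}

lemma zero_notMem_addSubsemigroupClosure
    (hsum : ∀ (m : ℕ) (c : Fin (m + 1) → V), (∀ i, c i ∈ P) → ∑ i, c i ≠ 0) :
    (0 : V) ∉ AddSubsemigroup.closure P := by
  let S : AddSubsemigroup V :=
    { carrier := {x | ∃ (m : ℕ) (c : Fin (m + 1) → V), (∀ i, c i ∈ P) ∧ ∑ i, c i = x}
      add_mem' := by
        rintro _ _ ⟨m, c, hc, rfl⟩ ⟨m', c', hc', rfl⟩
        refine ⟨m + 1 + m', @Fin.append (m + 1) (m' + 1) V c c', fun i => ?_, ?_⟩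
        · change Fin ((m + 1) + (m' + 1)) at i
          exact Fin.addCases (by simpa using hc) (by simpa using hc') i
        · change ∑ i : Fin ((m + 1) + (m' + 1)), Fin.append c c' i = _
          simp [Fin.sum_univ_add] }
  intro h0
  have hle : AddSubsemigroup.closure P ≤ S :=
    AddSubsemigroup.closure_le.mpr fun x hx => ⟨0, fun _ => x, fun _ => hx, by simp⟩
  obtain ⟨m, c, hc, hc0⟩ := hle h0
  exact hsum m c hc hc0

variable (P) in
/-- For a positive system `P` these are the roots of height `> m` that are reached from a positive
root by adding `m` positive roots one at a time without leaving `P`. -/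
def highRoots : ℕ → Set V
  | 0 => P
  | m + 1 => {γ ∈ P | ∃ α ∈ P, ∃ β ∈ highRoots m, γ = α + β}

lemma highRoots_subset : ∀ m, highRoots P m ⊆ P
  | 0 => subset_rfl
  | _ + 1 => fun _ hγ => hγ.1

lemma highRoots_succ_subset : ∀ m, highRoots P (m + 1) ⊆ highRoots P m
  | 0 => highRoots_subset 1
  | m + 1 => fun _ ⟨hγ, α, hα, β, hβ, hγαβ⟩ =>
    ⟨hγ, α, hα, β, highRoots_succ_subset m hβ, hγαβ⟩

lemma highRoots_antitone : Antitone (highRoots P) :=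
  antitone_nat_of_succ_le highRoots_succ_subset

lemma exists_finset_card_of_mem_highRoots (h0 : (0 : V) ∉ AddSubsemigroup.closure P) :
    ∀ {m : ℕ} {γ : V}, γ ∈ highRoots P m → ∃ s : Finset V, ↑s ⊆ P ∧ s.card = m + 1 ∧
      ∀ δ ∈ s, δ = γ ∨ γ - δ ∈ AddSubsemigroup.closure P
  | 0, γ, hγ => ⟨{γ}, by simpa [highRoots] using hγ, rfl, by simp⟩
  | m + 1, γ, hγ => by
    classical
    obtain ⟨hγ, α, hα, β, hβ, rfl⟩ := hγ
    obtain ⟨s, hsP, hcard, hbelow⟩ := exists_finset_card_of_mem_highRoots h0 hβ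
    have hα' : α ∈ AddSubsemigroup.closure P := AddSubsemigroup.subset_closure hα
    have hbelow' : ∀ δ ∈ s, α + β - δ ∈ AddSubsemigroup.closure P := by
      intro δ hδ
      rcases hbelow δ hδ with rfl | hδ
      · simpa using hα'
      · simpa [add_sub_assoc] using add_mem hα' hδ
    have hnew : α + β ∉ s := fun hmem => h0 (by simpa using hbelow' _ hmem)
    refine ⟨insert (α + β) s, ?_, by rw [Finset.card_insert_of_notMem hnew, hcard], ?_⟩
    · simpa [Set.insert_subset_iff] using ⟨hγ, hsP⟩
    · simpa using fun δ hδ => Or.inr (hbelow' δ hδ)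

lemma highRoots_eq_empty (hfin : P.Finite) (h0 : (0 : V) ∉ AddSubsemigroup.closure P) {m : ℕ}
    (hm : P.ncard ≤ m) : highRoots P m = ∅ := by
  refine Set.eq_empty_of_forall_notMem fun γ hγ => ?_
  obtain ⟨s, hsP, hcard, -⟩ := exists_finset_card_of_mem_highRoots h0 hγ
  have := Set.ncard_le_ncard hsP hfin
  rw [Set.ncard_coe_finset] at this
  omega

end PositiveSums

section RootFiltration

variable {K L : Type*} [Field K] [LieRing L] [LieAlgebra K L]

lemma lie_coe_mem {H : LieSubalgebra K L} (N : LieSubmodule K H L) (h : H) {u : L}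
    (hu : u ∈ N) : ⁅u, (h : L)⁆ ∈ N := by
  rw [← lie_skew, ← LieSubalgebra.coe_bracket_of_module]
  exact neg_mem (N.lie_mem hu)

variable (H : LieSubalgebra K L) [LieRing.IsNilpotent H] (P : Set (H → K))

noncomputable def rootFiltration (m : ℕ) : LieSubmodule K H L :=
  ⨆ γ ∈ highRoots P m, rootSpace H γ

variable {H P}

lemma rootFiltration_zero : rootFiltration H P 0 = ⨆ α ∈ P, rootSpace H α := rfl

lemma rootSpace_le_rootFiltration {m : ℕ} {γ : H → K} (hγ : γ ∈ highRoots P m) :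
    rootSpace H γ ≤ rootFiltration H P m :=
  le_iSup₂_of_le γ hγ le_rfl

lemma rootFiltration_antitone : Antitone (rootFiltration H P) := fun _ _ hmn =>
  iSup₂_le fun γ hγ => le_iSup₂_of_le γ (highRoots_antitone hmn hγ) le_rfl

lemma rootFiltration_eq_bot (hfin : P.Finite) (h0 : (0 : H → K) ∉ AddSubsemigroup.closure P)
    {m : ℕ} (hm : P.ncard ≤ m) : rootFiltration H P m = ⊥ := by
  simp [rootFiltration, highRoots_eq_empty hfin h0 hm]

section Bracket

variable (hadd : ∀ α ∈ P, ∀ β ∈ P, α + β ≠ 0 → rootSpace H (α + β) ≠ ⊥ → α + β ∈ P)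
  (h0 : (0 : H → K) ∉ AddSubsemigroup.closure P)
include hadd h0

lemma rootSpace_add_le_rootFiltration_succ {α γ : H → K} (hα : α ∈ P) {m : ℕ}
    (hγ : γ ∈ highRoots P m) : rootSpace H (α + γ) ≤ rootFiltration H P (m + 1) := by
  by_cases hbot : rootSpace H (α + γ) = ⊥
  · simp [hbot]
  have hne : α + γ ≠ 0 := fun hαγ => h0 <| hαγ ▸ add_mem
    (AddSubsemigroup.subset_closure hα) (AddSubsemigroup.subset_closure (highRoots_subset m hγ))
  exact rootSpace_le_rootFiltration
    ⟨hadd α hα γ (highRoots_subset m hγ) hne hbot, α, hα, γ, hγ, rfl⟩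

lemma lie_mem_rootFiltration_succ {m : ℕ} {u x : L} (hu : u ∈ rootFiltration H P 0)
    (hx : x ∈ rootFiltration H P m) : ⁅u, x⁆ ∈ rootFiltration H P (m + 1) := by
  let B : L →ₗ[K] L →ₗ[K] L :=
    LinearMap.mk₂ K (fun x y : L => ⁅x, y⁆) add_lie smul_lie lie_add lie_smul
  have : Submodule.map₂ B
      (rootFiltration H P 0 : Submodule K L) (rootFiltration H P m) ≤
      (rootFiltration H P (m + 1) : Submodule K L) := by
    conv_lhs => simp only [rootFiltration, LieSubmodule.iSup_toSubmodule,
      Submodule.map₂_iSup_left, Submodule.map₂_iSup_right]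
    simp only [iSup_le_iff, Submodule.map₂_le]
    intro γ hγ α hα y hy z hz
    exact rootSpace_add_le_rootFiltration_succ hadd h0 hα hγ
      (lie_mem_genWeightSpace_of_mem_genWeightSpace hy hz)
  exact this (Submodule.apply_mem_map₂ B hu hx)

end Bracket

section Generic

variable [FiniteDimensional K L] {h : H} (hgen : ∀ γ ∈ P, γ h ≠ 0)
include hgen

lemma rootFiltration_le_map_toEnd (m : ℕ) :
    (rootFiltration H P m : Submodule K L) ≤
      (rootFiltration H P m : Submodule K L).map (toEnd K H L h) := by
  conv_lhs => rw [rootFiltration]; simp only [LieSubmodule.iSup_toSubmodule]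
  refine iSup₂_le fun γ hγ x hx => ?_
  obtain ⟨y, hy, rfl⟩ := exists_lie_eq_of_mem_genWeightSpace (hgen γ (highRoots_subset m hγ)) hx
  exact ⟨y, rootSpace_le_rootFiltration hγ hy, rfl⟩

lemma mem_rootFiltration_succ_of_lie_mem {m : ℕ} {x : L} (hx : x ∈ rootFiltration H P m)
    (hhx : ⁅(h : L), x⁆ ∈ rootFiltration H P (m + 1)) : x ∈ rootFiltration H P (m + 1) := by
  obtain ⟨w, hw, hwx⟩ := rootFiltration_le_map_toEnd hgen (m + 1) hhx
  have hinj : Set.InjOn (toEnd K H L h) (rootFiltration H P m : Submodule K L) :=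
    injOn_of_le_map (fun y hy => (rootFiltration H P m).lie_mem hy)
      (rootFiltration_le_map_toEnd hgen m)
  rwa [hinj hx (rootFiltration_antitone m.le_succ hw) hwx.symm]

end Generic

section Exponential

variable (hadd : ∀ α ∈ P, ∀ β ∈ P, α + β ≠ 0 → rootSpace H (α + β) ≠ ⊥ → α + β ∈ P)
  (h0 : (0 : H → K) ∉ AddSubsemigroup.closure P)
include hadd h0

lemma pow_ad_apply_mem_rootFiltration {u : L} (hu : u ∈ rootFiltration H P 0) (h : H) :
    ∀ k, (ad K L u ^ (k + 1)) h ∈ rootFiltration H P k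
  | 0 => by simpa using lie_coe_mem _ h hu
  | k + 1 => by
    rw [pow_succ', Module.End.mul_apply, ad_apply]
    exact lie_mem_rootFiltration_succ hadd h0 hu (pow_ad_apply_mem_rootFiltration hu h k)

lemma expNilpotent_ad_apply_sub_mem {u : L} (hu : u ∈ rootFiltration H P 0) (h : H) :
    expNilpotent (ad K L u) h - h ∈ rootFiltration H P 0 :=
  expNilpotent_apply_sub_self_mem fun k =>
    rootFiltration_antitone k.zero_le (pow_ad_apply_mem_rootFiltration hadd h0 hu h k)

lemma pow_ad_sub_pow_ad_mem {u u' : L} (hu : u ∈ rootFiltration H P 0)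
    (hu' : u' ∈ rootFiltration H P 0) {m : ℕ} (hm : u - u' ∈ rootFiltration H P m) (h : H)
    (k : ℕ) : (ad K L u ^ (k + 2)) h - (ad K L u' ^ (k + 2)) h ∈ rootFiltration H P (m + 1) := by
  set D : ℕ → L := fun j => (ad K L u ^ j) h - (ad K L u' ^ j) h
  have hrec : ∀ k, D (k + 1) = ⁅u - u', (ad K L u ^ k) h⁆ + ⁅u', D k⁆ := by
    intro k
    simp only [D, pow_succ', Module.End.mul_apply, ad_apply, sub_lie, lie_sub]
    abel
  have hstep : ∀ k, D (k + 1) ∈ rootFiltration H P m →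
      D (k + 2) ∈ rootFiltration H P (m + 1) := by
    intro k hk
    rw [hrec, ← lie_skew]
    refine add_mem (neg_mem ?_) (lie_mem_rootFiltration_succ hadd h0 hu' hk)
    exact lie_mem_rootFiltration_succ hadd h0
      (rootFiltration_antitone k.zero_le (pow_ad_apply_mem_rootFiltration hadd h0 hu h k)) hm
  have hD : ∀ k, D (k + 1) ∈ rootFiltration H P m := by
    intro k
    induction k with
    | zero => simpa [D, sub_lie] using lie_coe_mem _ h hm
    | succ k ih => exact rootFiltration_antitone m.le_succ (hstep k ih)
  exact hstep k (hD k)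

variable [FiniteDimensional K L]

lemma expNilpotent_ad_sub_sub_mem {u u' : L} (hu : u ∈ rootFiltration H P 0)
    (hu' : u' ∈ rootFiltration H P 0) {m : ℕ} (hm : u - u' ∈ rootFiltration H P m) (h : H) :
    expNilpotent (ad K L u) h - expNilpotent (ad K L u') h - ⁅u - u', (h : L)⁆ ∈
      rootFiltration H P (m + 1) := by
  simpa [sub_lie] using
    expNilpotent_sub_expNilpotent_sub_mem (pow_ad_sub_pow_ad_mem hadd h0 hu hu' hm h)

variable {h : H} (hgen : ∀ γ ∈ P, γ h ≠ 0)
include hgen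

lemma sub_mem_rootFiltration_of_expNilpotent_eq {u u' : L} (hu : u ∈ rootFiltration H P 0)
    (hu' : u' ∈ rootFiltration H P 0)
    (heq : expNilpotent (ad K L u) h = expNilpotent (ad K L u') h) :
    ∀ m, u - u' ∈ rootFiltration H P m
  | 0 => sub_mem hu hu'
  | m + 1 => by
    have ih := sub_mem_rootFiltration_of_expNilpotent_eq hu hu' heq m
    have hlie := expNilpotent_ad_sub_sub_mem hadd h0 hu hu' ih h
    rw [heq, sub_self, zero_sub, neg_mem_iff, ← lie_skew, neg_mem_iff] at hlie
    exact mem_rootFiltration_succ_of_lie_mem hgen ih hlie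

lemma exists_expNilpotent_sub_mem_rootFiltration {n : L} (hn : n ∈ rootFiltration H P 0) :
    ∀ m, ∃ u ∈ rootFiltration H P 0,
      (h : L) + n - expNilpotent (ad K L u) h ∈ rootFiltration H P m
  | 0 => ⟨0, zero_mem _, by
      convert sub_mem hn (expNilpotent_ad_apply_sub_mem hadd h0 (zero_mem _) h) using 1
      abel⟩
  | m + 1 => by
    obtain ⟨u, hu, hδ⟩ := exists_expNilpotent_sub_mem_rootFiltration hn m
    obtain ⟨v, hv, hvδ⟩ := rootFiltration_le_map_toEnd hgen m hδ
    have hv0 := rootFiltration_antitone m.zero_le hv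
    refine ⟨u - v, sub_mem hu hv0, ?_⟩
    have := expNilpotent_ad_sub_sub_mem hadd h0 (sub_mem hu hv0) hu
      (by simpa using neg_mem hv : u - v - u ∈ rootFiltration H P m) h
    have hlie : ⁅u - v - u, (h : L)⁆ = (h : L) + n - expNilpotent (ad K L u) h := by
      rw [sub_sub_cancel_left, neg_lie, ← lie_skew, neg_neg, ← hvδ]
      rfl
    rw [hlie] at this
    convert neg_mem this using 1
    abel

end Exponential

lemma disjoint_rootSpace_zero_rootFiltration (h0 : (0 : H → K) ∉ AddSubsemigroup.closure P) :
    Disjoint (rootSpace H 0) (rootFiltration H P 0) :=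
  (iSupIndep_genWeightSpace K H L 0).mono_right <| iSup₂_le fun α hα =>
    le_iSup₂_of_le (f := fun χ (_ : χ ≠ 0) => rootSpace H χ) α
      (fun hα0 => h0 (hα0 ▸ AddSubsemigroup.subset_closure hα)) le_rfl

lemma eq_of_coe_add_eq_coe_add [H.IsCartanSubalgebra] [IsNoetherian K L]
    (h0 : (0 : H → K) ∉ AddSubsemigroup.closure P) {h h' : H} {n n' : L}
    (hn : n ∈ rootFiltration H P 0) (hn' : n' ∈ rootFiltration H P 0)
    (heq : (h : L) + n = h' + n') : h = h' := by
  have hH : (h : L) - h' ∈ rootSpace H 0 := by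
    rw [rootSpace_zero_eq]
    exact H.sub_mem h.2 h'.2
  have hN : (h : L) - h' ∈ rootFiltration H P 0 := by
    rw [sub_eq_sub_iff_add_eq_add.mpr (heq.trans (add_comm _ _))]
    exact sub_mem hn' hn
  have := (disjoint_rootSpace_zero_rootFiltration h0).le_bot ⟨hH, hN⟩
  exact Subtype.ext (sub_eq_zero.mp this)

end RootFiltration

theorem exp_ad_injective_and_image_generic_borel_general
    {K : Type*} [Field K]
    {L : Type*} [LieRing L] [LieAlgebra K L] [Module.Finite K L]
    (H : LieSubalgebra K L) [H.IsCartanSubalgebra]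
    (P : Set (H → K))
    (hP : ∀ α ∈ P, α ≠ 0 ∧ rootSpace H α ≠ ⊥)
    (hadd : ∀ α ∈ P, ∀ β ∈ P, α + β ≠ 0 → rootSpace H (α + β) ≠ ⊥ → α + β ∈ P)
    (hsum : ∀ (m : ℕ) (c : Fin (m + 1) → (H → K)),
      (∀ i, c i ∈ P) → ∑ i, c i ≠ 0)
    (N : LieSubmodule K H L) (hN : N = ⨆ α ∈ P, rootSpace H α)
    (Hgen : Set H) (hHgen : Hgen = {h : H | ∀ α : H → K, α ≠ 0 → rootSpace H α ≠ ⊥ → α h ≠ 0}) :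
    (∀ u ∈ N, ∀ u' ∈ N, ∀ h ∈ Hgen, ∀ h' ∈ Hgen,
        expNilpotent (LieAlgebra.ad K L u) (h : L) = expNilpotent (LieAlgebra.ad K L u') (h' : L) →
          u = u' ∧ h = h') ∧
      (∀ x : L,
        (∃ u ∈ N, ∃ h ∈ Hgen, expNilpotent (LieAlgebra.ad K L u) (h : L) = x) ↔
          (∃ h ∈ Hgen, ∃ n ∈ N, x = (h : L) + n)) := by
  rw [← rootFiltration_zero] at hN
  subst hN hHgen
  have h0 := zero_notMem_addSubsemigroupClosure hsum
  have hfin : P.Finite := (finite_genWeightSpace_ne_bot K H L).subset fun α hα => (hP α hα).2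
  have hgen : ∀ h : H, (∀ α : H → K, α ≠ 0 → rootSpace H α ≠ ⊥ → α h ≠ 0) → ∀ γ ∈ P, γ h ≠ 0 :=
    fun h hh γ hγ => hh γ (hP γ hγ).1 (hP γ hγ).2
  have hbot : rootFiltration H P P.ncard = ⊥ := rootFiltration_eq_bot hfin h0 le_rfl
  refine ⟨fun u hu u' hu' h hh h' hh' heq => ?_, fun x => ⟨?_, ?_⟩⟩
  · obtain rfl : h = h' := eq_of_coe_add_eq_coe_add h0
      (expNilpotent_ad_apply_sub_mem hadd h0 hu h) (expNilpotent_ad_apply_sub_mem hadd h0 hu' h')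
      (by simpa using heq)
    have := sub_mem_rootFiltration_of_expNilpotent_eq hadd h0 (hgen h hh) hu hu' heq P.ncard
    rw [hbot, LieSubmodule.mem_bot, sub_eq_zero] at this
    exact ⟨this, rfl⟩
  · rintro ⟨u, hu, h, hh, rfl⟩
    exact ⟨h, hh, _, expNilpotent_ad_apply_sub_mem hadd h0 hu h, (add_sub_cancel _ _).symm⟩
  · rintro ⟨h, hh, n, hn, rfl⟩
    obtain ⟨u, hu, hmem⟩ :=
      exists_expNilpotent_sub_mem_rootFiltration hadd h0 (hgen h hh) hn P.ncard
    rw [hbot, LieSubmodule.mem_bot, sub_eq_zero] at hmem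
    exact ⟨u, hu, h, hh, hmem.symm⟩

/-- **The isomorphism `U × 𝔱_gen ≅ 𝔟_gen` at the level of points.**
`K` algebraically closed of characteristic zero, `L` a finite-dimensional Lie algebra over `K`
with nondegenerate Killing form, `H` a Cartan subalgebra, `P` a positive system of roots,
`N := Σ_{α ∈ P} L_α` and `H_gen := {h ∈ H : α h ≠ 0 for every root α}`.  The map
`N × H_gen → L`, `(u, h) ↦ exp (ad u) h`, is injective with image exactly
`{h + n : h ∈ H_gen, n ∈ N}`. -/
theorem exp_ad_injective_and_image_generic_borel
    {K : Type*} [Field K] [IsAlgClosed K] [CharZero K]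
    {L : Type*} [LieRing L] [LieAlgebra K L] [Module.Finite K L]
    [LieAlgebra.IsKilling K L]
    (H : LieSubalgebra K L) [H.IsCartanSubalgebra]
    (P : Set (H → K))
    (hP : ∀ α ∈ P, α ≠ 0 ∧ rootSpace H α ≠ ⊥)
    (hxor : ∀ α : H → K, α ≠ 0 → rootSpace H α ≠ ⊥ → Xor' (α ∈ P) (-α ∈ P))
    (hadd : ∀ α ∈ P, ∀ β ∈ P, α + β ≠ 0 → rootSpace H (α + β) ≠ ⊥ → α + β ∈ P)
    (hsum : ∀ (m : ℕ) (c : Fin (m + 1) → (H → K)),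
      (∀ i, c i ∈ P) → ∑ i, c i ≠ 0)
    (N : LieSubmodule K H L) (hN : N = ⨆ α ∈ P, rootSpace H α)
    (Hgen : Set H) (hHgen : Hgen = {h : H | ∀ α : H → K, α ≠ 0 → rootSpace H α ≠ ⊥ → α h ≠ 0}) :
    (∀ u ∈ N, ∀ u' ∈ N, ∀ h ∈ Hgen, ∀ h' ∈ Hgen,
        expNilpotent (LieAlgebra.ad K L u) (h : L) = expNilpotent (LieAlgebra.ad K L u') (h' : L) →
          u = u' ∧ h = h') ∧
      (∀ x : L,
        (∃ u ∈ N, ∃ h ∈ Hgen, expNilpotent (LieAlgebra.ad K L u) (h : L) = x) ↔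
          (∃ h ∈ Hgen, ∃ n ∈ N, x = (h : L) + n)) :=
  exp_ad_injective_and_image_generic_borel_general H P hP hadd hsum N hN Hgen hHgen
end

section
/- Let S and T be disjoint sets of roots of L satisfying: (i) whenever β ∈ T, γ ∈ S and β + γ is a root, one has β + γ ∈ S; (ii) −β ∉ S for every β ∈ T; (iii) no sum of a nonempty finite family (with repetitions allowed) of elements of T equals zero. Let h ∈ H satisfy α(h) ≠ 0 for every α ∈ S, and let n ∈ Σ_{β∈T} L_β. Then the subspace V := Σ_{γ∈S} L_γ is invariant under ad(h + n), and ad(h + n) restricts to a bijective linear endomorphism of V. (This is the key computation, with T the positive roots of the Levi subalgebra and S the remaining positive roots, showing in the paper's anti-generic torsor lemma that ad_x : 𝔳_I → 𝔳_I is bijective for x lying over the anti-generic locus.) -/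
/-!
The Lie bracket adds weights, and `ad h` acts invertibly on each root space `L_γ`, `γ ∈ S`.
Because no nonempty sum of elements of `T` vanishes, the relation `γ = β + γ'` (`β ∈ T`) has no
cycles, so the finite set `S` contains a `γ₀` outside `T + S`. For `v ∈ V` in the kernel of
`ad (h + n)`, the `L_{γ₀}`-component of `⁅h + n, v⁆` is `⁅h, v_{γ₀}⁆`, so `v_{γ₀} = 0`, and
induction on `S` gives injectivity; bijectivity follows as `V` is finite-dimensional.
Conditions (i) and (ii) make `V` invariant.
-/

open LieModule LieAlgebra

theorem Finite.exists_isPeriodicPt {α : Type*} [Finite α] [Nonempty α] (f : α → α) :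
    ∃ x, ∃ m, 0 < m ∧ Function.IsPeriodicPt f m x := by
  obtain ⟨x₀⟩ := ‹Nonempty α›
  obtain ⟨i, j, hij, heq⟩ := Finite.exists_ne_map_eq_of_infinite fun k => f^[k] x₀
  wlog hlt : i < j generalizing i j
  · exact this j i hij.symm heq.symm (by omega)
  refine ⟨f^[i] x₀, j - i, by omega, ?_⟩
  simp only [Function.IsPeriodicPt, Function.IsFixedPt, ← Function.iterate_add_apply]
  rw [Nat.sub_add_cancel hlt.le]
  exact heq.symm

theorem Function.sum_range_iterate_add {α A : Type*} [AddCommMonoid A] (p : α → α) (b v : α → A)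
    (hp : ∀ x, b x + v (p x) = v x) (x : α) (m : ℕ) :
    ∑ i ∈ Finset.range m, b (p^[i] x) + v (p^[m] x) = v x := by
  induction m with
  | zero => simp
  | succ m ih =>
    rw [Finset.sum_range_succ, add_assoc, Function.iterate_succ_apply', hp, ih]

theorem Finset.exists_mem_forall_add_ne {A : Type*} [AddCommGroup A] {T : Set A}
    (hT : ∀ (m : ℕ) (c : Fin (m + 1) → A), (∀ i, c i ∈ T) → ∑ i, c i ≠ 0)
    {s : Finset A} (hs : s.Nonempty) : ∃ γ₀ ∈ s, ∀ β ∈ T, ∀ γ ∈ s, β + γ ≠ γ₀ := by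
  by_contra! hpred
  have : ∀ γ₀ : s, ∃ β ∈ T, ∃ γ : s, β + γ = (γ₀ : A) := fun ⟨γ₀, hγ₀⟩ => by
    obtain ⟨β, hβ, γ, hγ, h⟩ := hpred γ₀ hγ₀
    exact ⟨β, hβ, ⟨γ, hγ⟩, h⟩
  choose b hb p hbp using this
  have : Nonempty s := hs.to_subtype
  obtain ⟨x, m, hm, hx⟩ := Finite.exists_isPeriodicPt p
  have hcycle := Function.sum_range_iterate_add p b (fun γ => (γ : A)) hbp x m
  rw [hx.eq, add_eq_right] at hcycle
  obtain ⟨k, rfl⟩ := Nat.exists_eq_add_one_of_ne_zero hm.ne'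
  refine hT k (fun i => b (p^[i] x)) (fun _ => hb _) ?_
  rwa [Fin.sum_univ_eq_sum_range (fun i => b (p^[i] x))]

section
variable {K L M : Type*} [Field K] [LieRing L] [LieAlgebra K L]
  [AddCommGroup M] [Module K M] [LieRingModule L M] [LieModule K L M]
  {H : LieSubalgebra K L} [LieRing.IsNilpotent H]

open scoped Pointwise

theorem lie_mem_iSup_genWeightSpace_add {T S : Set (H → K)} {x : L} {m : M}
    (hx : x ∈ ⨆ β ∈ T, rootSpace H β) (hm : m ∈ ⨆ γ ∈ S, genWeightSpace M γ) :
    ⁅x, m⁆ ∈ ⨆ χ ∈ T + S, genWeightSpace M χ := by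
  simp_rw [← LieSubmodule.mem_toSubmodule, LieSubmodule.iSup_toSubmodule] at hx hm ⊢
  have hxm := Submodule.apply_mem_map₂ (toEnd K L M : L →ₗ[K] Module.End K M) hx hm
  simp_rw [Submodule.map₂_iSup_left, Submodule.map₂_iSup_right] at hxm
  refine (iSup₂_le fun β hβ => iSup₂_le fun γ hγ => Submodule.map₂_le.mpr fun y hy z hz => ?_) hxm
  exact le_iSup₂ (f := fun χ (_ : χ ∈ T + S) => (genWeightSpace M χ).toSubmodule) (β + γ)
    (Set.add_mem_add hβ hγ) (lie_mem_genWeightSpace_of_mem_genWeightSpace hy hz)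

theorem eq_zero_of_lie_eq_zero_of_mem_genWeightSpace {χ : H → K} {h : H} {m : M}
    (hm : m ∈ genWeightSpace M χ) (hhm : ⁅h, m⁆ = 0) (hχ : χ h ≠ 0) : m = 0 := by
  have hm₀ : m ∈ genWeightSpaceOf M (0 : K) h := by
    rw [mem_genWeightSpaceOf]
    exact ⟨1, by simpa using hhm⟩
  have := (disjoint_genWeightSpaceOf K H M hχ).le_bot
    ((LieSubmodule.mem_inf _ _ _).mpr ⟨genWeightSpace_le_genWeightSpaceOf M h χ hm, hm₀⟩)
  simpa using this

theorem lie_mem_iSup_genWeightSpace_of_add_mem {T S : Set (H → K)}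
    (hTS : ∀ β ∈ T, ∀ γ ∈ S, β + γ ∈ S ∨ genWeightSpace M (β + γ) = ⊥)
    (h : H) {n : L} (hn : n ∈ ⨆ β ∈ T, rootSpace H β) {m : M}
    (hm : m ∈ ⨆ γ ∈ S, genWeightSpace M γ) :
    ⁅(h : L) + n, m⁆ ∈ ⨆ γ ∈ S, genWeightSpace M γ := by
  rw [add_lie, ← LieSubalgebra.coe_bracket_of_module]
  refine add_mem (LieSubmodule.lie_mem _ hm) ?_
  have hle : ⨆ χ ∈ T + S, genWeightSpace M χ ≤ ⨆ γ ∈ S, genWeightSpace M γ := by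
    refine iSup₂_le fun χ hχ => ?_
    obtain ⟨β, hβ, γ, hγ, rfl⟩ := Set.mem_add.mp hχ
    rcases hTS β hβ γ hγ with hS | hbot
    · exact le_biSup (fun γ => genWeightSpace M γ) hS
    · exact hbot ▸ bot_le
  exact hle (lie_mem_iSup_genWeightSpace_add hn hm)

theorem eq_zero_of_lie_eq_zero_of_mem_iSup_genWeightSpace {T : Set (H → K)}
    (hT : ∀ (m : ℕ) (c : Fin (m + 1) → (H → K)), (∀ i, c i ∈ T) → ∑ i, c i ≠ 0)
    {s : Finset (H → K)} {h : H} (hs : ∀ γ ∈ s, γ h ≠ 0)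
    {n : L} (hn : n ∈ ⨆ β ∈ T, rootSpace H β) {m : M}
    (hm : m ∈ ⨆ γ ∈ s, genWeightSpace M γ) (hhnm : ⁅(h : L) + n, m⁆ = 0) : m = 0 := by
  classical
  induction s using Finset.strongInduction generalizing m with
  | H s ih =>
  rcases s.eq_empty_or_nonempty with rfl | hne
  · simpa using hm
  obtain ⟨γ₀, hγ₀, hmin⟩ := Finset.exists_mem_forall_add_ne hT hne
  set U := ⨆ χ, ⨆ (_ : χ ≠ γ₀), genWeightSpace M χ
  have hnm : ⁅n, m⁆ ∈ U := by
    have hle : ⨆ χ ∈ T + (s : Set (H → K)), genWeightSpace M χ ≤ U := biSup_mono fun χ hχ => by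
      obtain ⟨β, hβ, γ, hγ, rfl⟩ := Set.mem_add.mp hχ
      exact hmin β hβ γ hγ
    exact hle (lie_mem_iSup_genWeightSpace_add hn hm)
  rw [← Finset.insert_erase hγ₀, Finset.iSup_insert] at hm
  obtain ⟨m₀, hm₀, m', hm', rfl⟩ := (LieSubmodule.mem_sup _ _ _).mp hm
  have hm'U : ⁅h, m'⁆ ∈ U := by
    have hle : ⨆ γ ∈ s.erase γ₀, genWeightSpace M γ ≤ U :=
      biSup_mono fun _ => Finset.ne_of_mem_erase
    exact LieSubmodule.lie_mem _ (hle hm')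
  have hhm₀U : ⁅h, m₀⁆ ∈ U := by
    have : ⁅h, m₀⁆ = -(⁅h, m'⁆ + ⁅n, m₀ + m'⁆) := by
      rw [add_lie, lie_add, ← LieSubalgebra.coe_bracket_of_module,
        ← LieSubalgebra.coe_bracket_of_module] at hhnm
      rw [eq_neg_iff_add_eq_zero, ← hhnm]
      abel
    rw [this]
    exact neg_mem (add_mem hm'U hnm)
  have hhm₀ : ⁅h, m₀⁆ = 0 := by
    simpa using (iSupIndep_genWeightSpace K H M γ₀).le_bot
      ((LieSubmodule.mem_inf _ _ _).mpr ⟨LieSubmodule.lie_mem _ hm₀, hhm₀U⟩)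
  obtain rfl := eq_zero_of_lie_eq_zero_of_mem_genWeightSpace hm₀ hhm₀ (hs γ₀ hγ₀)
  rw [zero_add] at hhnm ⊢
  exact ih _ (Finset.erase_ssubset hγ₀) (fun γ hγ => hs γ (Finset.mem_of_mem_erase hγ)) hm' hhnm

end

theorem ad_restrict_bijective_on_sum_rootSpaces_general
    {K : Type*} [Field K]
    {L : Type*} [LieRing L] [LieAlgebra K L] [Module.Finite K L]
    (H : LieSubalgebra K L) [H.IsCartanSubalgebra]
    (S T : Set (H → K))
    (hS : ∀ γ ∈ S, γ ≠ 0 ∧ rootSpace H γ ≠ ⊥)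
    (hadd : ∀ β ∈ T, ∀ γ ∈ S, β + γ ≠ 0 → rootSpace H (β + γ) ≠ ⊥ → β + γ ∈ S)
    (hneg : ∀ β ∈ T, -β ∉ S)
    (hsum : ∀ (m : ℕ) (c : Fin (m + 1) → (H → K)),
      (∀ i, c i ∈ T) → ∑ i, c i ≠ 0)
    (h : H) (hgen : ∀ γ ∈ S, γ h ≠ 0)
    (n : L) (hn : n ∈ ⨆ β ∈ T, rootSpace H β)
    (V : Submodule K L) (hV : V = ⨆ γ ∈ S, (rootSpace H γ : LieSubmodule K H L).toSubmodule) :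
    ∃ hmap : ∀ v ∈ V, LieAlgebra.ad K L ((h : L) + n) v ∈ V,
      Function.Bijective ((LieAlgebra.ad K L ((h : L) + n)).restrict hmap) := by
  have hTS : ∀ β ∈ T, ∀ γ ∈ S, β + γ ∈ S ∨ rootSpace H (β + γ) = ⊥ := fun β hβ γ hγ => by
    by_cases hbot : rootSpace H (β + γ) = ⊥
    · exact .inr hbot
    refine .inl (hadd β hβ γ hγ (fun hzero => hneg β hβ ?_) hbot)
    rwa [← eq_neg_of_add_eq_zero_right hzero]
  have hfin : S.Finite := (finite_genWeightSpace_ne_bot K H L).subset fun γ hγ => (hS γ hγ).2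
  lift S to Finset (H → K) using hfin
  replace hV : V = (⨆ γ ∈ S, rootSpace H γ : LieSubmodule K H L) := by
    simp [hV, LieSubmodule.iSup_toSubmodule]
  have hmap : ∀ v ∈ V, ad K L ((h : L) + n) v ∈ V := fun v hv => by
    rw [hV] at hv ⊢
    exact lie_mem_iSup_genWeightSpace_of_add_mem hTS h hn hv
  refine ⟨hmap, ?_⟩
  have hinj : Function.Injective ((ad K L ((h : L) + n)).restrict hmap) := by
    rw [← LinearMap.ker_eq_bot, LinearMap.ker_eq_bot']
    rintro ⟨v, hv⟩ hv0
    rw [hV] at hv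
    exact Subtype.ext <| eq_zero_of_lie_eq_zero_of_mem_iSup_genWeightSpace hsum hgen hn hv
      (congrArg Subtype.val hv0)
  exact ⟨hinj, LinearMap.injective_iff_surjective.mp hinj⟩

/-- **Bijectivity of `ad (h + n)` on a sum of root spaces avoided by `h`.**
`K` algebraically closed of characteristic zero, `L` a finite-dimensional Lie algebra over `K`
with nondegenerate Killing form, `H` a Cartan subalgebra.  Let `S` and `T` be disjoint sets of
roots with: (i) whenever `β ∈ T`, `γ ∈ S` and `β + γ` is a root, `β + γ ∈ S`; (ii) `-β ∉ S`
for every `β ∈ T`; (iii) no nonempty finite family (repetitions allowed) of elements of `T`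
sums to zero.  Let `h ∈ H` satisfy `α h ≠ 0` for all `α ∈ S` and let `n ∈ Σ_{β ∈ T} L_β`.
Then `V := Σ_{γ ∈ S} L_γ` is invariant under `ad (h + n)`, which restricts to a bijective
endomorphism of `V`. -/
theorem ad_restrict_bijective_on_sum_rootSpaces
    {K : Type*} [Field K] [IsAlgClosed K] [CharZero K]
    {L : Type*} [LieRing L] [LieAlgebra K L] [Module.Finite K L]
    [LieAlgebra.IsKilling K L]
    (H : LieSubalgebra K L) [H.IsCartanSubalgebra]
    (S T : Set (H → K)) (hST : Disjoint S T)
    (hS : ∀ γ ∈ S, γ ≠ 0 ∧ rootSpace H γ ≠ ⊥)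
    (hT : ∀ β ∈ T, β ≠ 0 ∧ rootSpace H β ≠ ⊥)
    (hadd : ∀ β ∈ T, ∀ γ ∈ S, β + γ ≠ 0 → rootSpace H (β + γ) ≠ ⊥ → β + γ ∈ S)
    (hneg : ∀ β ∈ T, -β ∉ S)
    (hsum : ∀ (m : ℕ) (c : Fin (m + 1) → (H → K)),
      (∀ i, c i ∈ T) → ∑ i, c i ≠ 0)
    (h : H) (hgen : ∀ γ ∈ S, γ h ≠ 0)
    (n : L) (hn : n ∈ ⨆ β ∈ T, rootSpace H β)
    (V : Submodule K L) (hV : V = ⨆ γ ∈ S, (rootSpace H γ : LieSubmodule K H L).toSubmodule) :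
    ∃ hmap : ∀ v ∈ V, LieAlgebra.ad K L ((h : L) + n) v ∈ V,
      Function.Bijective ((LieAlgebra.ad K L ((h : L) + n)).restrict hmap) :=
  ad_restrict_bijective_on_sum_rootSpaces_general H S T hS hadd hneg hsum h hgen n hn V hV
end
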